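/- arXiv:1604.07220 — 6 statements merged into one kernel-verified Lean document; each statement's English description precedes it below -/
import Mathlib

section
/- Let M be a compact metric space, f : M → M a continuous map, (T, μ̃) a probability space, and a, b : T → M measurable maps. Set μ = a_*μ̃ and ν = b_*μ̃ (equivalently μ = ∫ δ_{a(t)} dμ̃(t) and ν = ∫ δ_{b(t)} dμ̃(t)), and assume both μ and ν are f-invariant, i.e. f_*μ = μ and f_*ν = ν. If for every t ∈ T one has d(fⁿ(a(t)), fⁿ(b(t))) → 0 as n → ∞, then μ = ν. -/
open MeasureTheory Filter

/-- If two `f`-invariant measures `μ = a_* μ̃` and `ν = b_* μ̃` on a compact metric space are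
pushforwards of the same probability measure under maps `a, b` whose orbits under `f` are
asymptotic (`d(fⁿ(a(t)), fⁿ(b(t))) → 0` for every `t`), then `μ = ν`. -/
theorem stmt1
    {M : Type*} [MetricSpace M] [CompactSpace M] [MeasurableSpace M] [BorelSpace M]
    (f : M → M) (hf : Continuous f)
    {T : Type*} [MeasurableSpace T] (μt : Measure T) [IsProbabilityMeasure μt]
    (a b : T → M) (ha : Measurable a) (hb : Measurable b)
    (μ ν : Measure M)
    (hμ : μ = Measure.map a μt) (hν : ν = Measure.map b μt)
    (hμinv : Measure.map f μ = μ) (hνinv : Measure.map f ν = ν)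
    (hasymp : ∀ t : T,
      Tendsto (fun n : ℕ => dist (f^[n] (a t)) (f^[n] (b t))) atTop (nhds 0)) :
    μ = ν := by
  have hfn : ∀ n : ℕ, Measurable (f^[n]) := fun n => (hf.iterate n).measurable
  -- invariance under iterates, expressed through the pushforwards
  have hmapμ : ∀ n : ℕ, Measure.map (f^[n] ∘ a) μt = μ := by
    intro n
    induction n with
    | zero => simpa [Function.iterate_zero] using hμ.symm
    | succ n ih =>
      rw [Function.iterate_succ', Function.comp_assoc,
        ← Measure.map_map hf.measurable ((hfn n).comp ha), ih, hμinv]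
  have hmapν : ∀ n : ℕ, Measure.map (f^[n] ∘ b) μt = ν := by
    intro n
    induction n with
    | zero => simpa [Function.iterate_zero] using hν.symm
    | succ n ih =>
      rw [Function.iterate_succ', Function.comp_assoc,
        ← Measure.map_map hf.measurable ((hfn n).comp hb), ih, hνinv]
  haveI : IsProbabilityMeasure μ := hμ ▸ Measure.isProbabilityMeasure_map ha.aemeasurable
  haveI : IsProbabilityMeasure ν := hν ▸ Measure.isProbabilityMeasure_map hb.aemeasurable
  -- key step: integrals of continuous functions agree
  have key : ∀ g : M → ℝ, Continuous g → ∫ x, g x ∂μ = ∫ x, g x ∂ν := by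
    intro g hg
    obtain ⟨C, hC⟩ := isCompact_univ.exists_bound_of_continuousOn hg.continuousOn
    have hC' : ∀ x : M, ‖g x‖ ≤ C := fun x => hC x (Set.mem_univ x)
    have hgm : Measurable g := hg.measurable
    have hmeas : ∀ n : ℕ, Measurable (fun t => g (f^[n] (a t))) := fun n =>
      hgm.comp ((hfn n).comp ha)
    have hmeasb : ∀ n : ℕ, Measurable (fun t => g (f^[n] (b t))) := fun n =>
      hgm.comp ((hfn n).comp hb)
    have hinta : ∀ n : ℕ, Integrable (fun t => g (f^[n] (a t))) μt := fun n =>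
      (integrable_const C).mono' (hmeas n).aestronglyMeasurable
        (Filter.Eventually.of_forall fun t => hC' _)
    have hintb : ∀ n : ℕ, Integrable (fun t => g (f^[n] (b t))) μt := fun n =>
      (integrable_const C).mono' (hmeasb n).aestronglyMeasurable
        (Filter.Eventually.of_forall fun t => hC' _)
    have hA : ∀ n : ℕ, ∫ t, g (f^[n] (a t)) ∂μt = ∫ x, g x ∂μ := by
      intro n
      rw [← hmapμ n, integral_map ((hfn n).comp ha).aemeasurable hg.aestronglyMeasurable]
      rfl
    have hB : ∀ n : ℕ, ∫ t, g (f^[n] (b t)) ∂μt = ∫ x, g x ∂ν := by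
      intro n
      rw [← hmapν n, integral_map ((hfn n).comp hb).aemeasurable hg.aestronglyMeasurable]
      rfl
    -- dominated convergence for the difference
    have hug : UniformContinuous g := CompactSpace.uniformContinuous_of_continuous hg
    have hptwise : ∀ t : T,
        Tendsto (fun n : ℕ => g (f^[n] (a t)) - g (f^[n] (b t))) atTop (nhds 0) := by
      intro t
      rw [tendsto_zero_iff_norm_tendsto_zero]
      have : ∀ n : ℕ, ‖g (f^[n] (a t)) - g (f^[n] (b t))‖
          = dist (g (f^[n] (a t))) (g (f^[n] (b t))) := by
        intro n; rw [dist_eq_norm]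
      simp only [this]
      rw [Metric.tendsto_atTop]
      intro ε hε
      obtain ⟨δ, hδ, hδ'⟩ := Metric.uniformContinuous_iff.mp hug ε hε
      obtain ⟨N, hN⟩ := Metric.tendsto_atTop.mp (hasymp t) δ hδ
      refine ⟨N, fun n hn => ?_⟩
      rw [Real.dist_eq, sub_zero, abs_of_nonneg dist_nonneg]
      apply hδ'
      have := hN n hn
      rw [Real.dist_eq, sub_zero] at this
      exact lt_of_le_of_lt (le_abs_self _) this
    have hdct : Tendsto
        (fun n : ℕ => ∫ t, (g (f^[n] (a t)) - g (f^[n] (b t))) ∂μt) atTop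
        (nhds (∫ _t, (0 : ℝ) ∂μt)) := by
      refine tendsto_integral_of_dominated_convergence (fun _ => C + C)
        (fun n => ((hmeas n).sub (hmeasb n)).aestronglyMeasurable)
        (integrable_const _) (fun n => Filter.Eventually.of_forall fun t => ?_)
        (Filter.Eventually.of_forall fun t => hptwise t)
      calc ‖g (f^[n] (a t)) - g (f^[n] (b t))‖
          ≤ ‖g (f^[n] (a t))‖ + ‖g (f^[n] (b t))‖ := norm_sub_le _ _
        _ ≤ C + C := add_le_add (hC' _) (hC' _)
    have hconst : ∀ n : ℕ, ∫ t, (g (f^[n] (a t)) - g (f^[n] (b t))) ∂μt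
        = (∫ x, g x ∂μ) - ∫ x, g x ∂ν := by
      intro n
      rw [integral_sub (hinta n) (hintb n), hA n, hB n]
    simp only [hconst, integral_zero] at hdct
    have := tendsto_nhds_unique hdct tendsto_const_nhds
    linarith
  -- conclude equality of measures
  apply ext_of_forall_lintegral_eq_of_IsFiniteMeasure
  intro g
  have hgc : Continuous fun x => (g x : ℝ) := NNReal.continuous_coe.comp g.continuous
  have hint : ∀ (ρ : Measure M) [IsProbabilityMeasure ρ],
      Integrable (fun x => (g x : ℝ)) ρ := by
    intro ρ _
    obtain ⟨C, hC⟩ := isCompact_univ.exists_bound_of_continuousOn hgc.continuousOn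
    exact (integrable_const C).mono' hgc.measurable.aestronglyMeasurable
      (Filter.Eventually.of_forall fun x => hC x (Set.mem_univ x))
  rw [lintegral_coe_eq_integral g (hint μ), lintegral_coe_eq_integral g (hint ν),
    key _ hgc]
end

section
/- Let α and Ω be standard Borel spaces and ρ a Borel probability measure on α × Ω with disintegration (ρ_a)_{a∈α} over the first coordinate. Let T : α × Ω → α × Ω be a measurable map of the form T(a,ω) = (g(a), h(a,ω)), where g : α → α is a measurable bijection with measurable inverse and h is measurable, and assume T_*ρ = ρ. Then g_*(ρ.fst) = ρ.fst, and for ρ.fst-almost every a, the pushforward of ρ_a under h(a,·) equals ρ_{g(a)}. -/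
open MeasureTheory ProbabilityTheory

/-- Equivariance of the Rokhlin disintegration: if `T(a,ω) = (g a, h (a,ω))` preserves a
probability measure `ρ` on a product of standard Borel spaces, where `g` is a measurable
bijection with measurable inverse, then `g` preserves the first marginal `ρ.fst` and, for
`ρ.fst`-a.e. `a`, the fiber map `h(a, ·)` pushes the conditional measure `ρ_a` to `ρ_{g a}`. -/
theorem stmt3
    {α Ω : Type*}
    [MeasurableSpace α] [StandardBorelSpace α] [Nonempty α]
    [MeasurableSpace Ω] [StandardBorelSpace Ω] [Nonempty Ω]
    (ρ : Measure (α × Ω)) [IsProbabilityMeasure ρ]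
    (g : α ≃ᵐ α) (h : α × Ω → Ω) (hh : Measurable h)
    (T : α × Ω → α × Ω) (hT : T = fun p => (g p.1, h p))
    (hinv : Measure.map T ρ = ρ) :
    Measure.map g ρ.fst = ρ.fst ∧
      ∀ᵐ a ∂ρ.fst,
        Measure.map (fun ω => h (a, ω)) (ρ.condKernel a) = ρ.condKernel (g a) := by
  have hTmeas : Measurable T := by
    rw [hT]; exact (g.measurable.comp measurable_fst).prodMk hh
  -- first marginal is preserved
  have hfst : Measure.map g ρ.fst = ρ.fst := by
    have h1 : Measure.map g ρ.fst = Measure.map (fun p : α × Ω => g p.1) ρ := by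
      rw [Measure.fst, Measure.map_map g.measurable measurable_fst]
      rfl
    have h2 : (fun p : α × Ω => g p.1) = Prod.fst ∘ T := by
      rw [hT]; rfl
    rw [h1, h2, ← Measure.map_map measurable_fst hTmeas, hinv]
    rfl
  refine ⟨hfst, ?_⟩
  have hgp : MeasurePreserving (g : α → α) ρ.fst ρ.fst := ⟨g.measurable, hfst⟩
  -- the candidate equivariant kernel
  set η : Kernel α Ω :=
    Kernel.map ((Kernel.deterministic (g.symm : α → α) g.symm.measurable) ×ₖ
      (ρ.condKernel.comap (g.symm : α → α) g.symm.measurable)) h with hη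
  have hη_apply : ∀ a, η a =
      Measure.map (fun ω => h (g.symm a, ω)) (ρ.condKernel (g.symm a)) := by
    intro a
    rw [hη, Kernel.map_apply _ hh, Kernel.prod_apply, Kernel.deterministic_apply,
      Kernel.comap_apply, Measure.dirac_prod,
      Measure.map_map hh (measurable_prodMk_left)]
    rfl
  have hηM : IsMarkovKernel η := by
    rw [hη]
    have : IsMarkovKernel (ρ.condKernel.comap (g.symm : α → α) g.symm.measurable) :=
      Kernel.IsMarkovKernel.comap _ _
    exact Kernel.IsMarkovKernel.map _ hh
  -- ρ disintegrates over η
  have hcomp : ρ = ρ.fst ⊗ₘ η := by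
    conv_lhs => rw [← hinv, ← ρ.disintegrate ρ.condKernel]
    ext s hs
    rw [Measure.map_apply hTmeas hs,
      Measure.compProd_apply (hTmeas hs), Measure.compProd_apply hs]
    have key : ∀ b : α,
        ρ.condKernel b (Prod.mk b ⁻¹' (T ⁻¹' s)) = η (g b) (Prod.mk (g b) ⁻¹' s) := by
      intro b
      rw [hη_apply, g.symm_apply_apply,
        Measure.map_apply (by exact hh.comp measurable_prodMk_left)
          (measurable_prodMk_left hs)]
      congr 1
      ext ω
      simp [hT, Set.mem_preimage]
    simp_rw [key]
    rw [← lintegral_map (Kernel.measurable_kernel_prodMk_left hs) g.measurable, hfst]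
  have huniq := eq_condKernel_of_measure_eq_compProd η hcomp
  have huniq' : ∀ᵐ a ∂ρ.fst, η (g a) = ρ.condKernel (g a) := hgp.quasiMeasurePreserving.ae huniq
  filter_upwards [huniq'] with a ha
  rw [← ha, hη_apply, g.symm_apply_apply]
end

section
/- Let m be a Borel probability measure on ℝ^p × ℝ^q, let π : ℝ^p × ℝ^q → ℝ^p be the projection onto the first factor, let m̄ = π_*m be the projected measure, and let (m_t)_{t∈ℝ^p} be the conditional measures of m on the fibers {t} × ℝ^q given by Rokhlin disintegration. Define γ(t) = liminf_{ε→0} log m̄(B^p(t,ε)) / log ε. Suppose δ ≥ 0 is such that for m-almost every (t,s), δ ≤ liminf_{ε→0} log m_t(B^q(s,ε)) / log ε. Then for m-almost every (t,s), δ + γ(t) ≤ liminf_{ε→0} log m(B^{p+q}((t,s),ε)) / log ε, where B^{p+q} denotes balls in the product (max) metric on ℝ^p × ℝ^q. -/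
/-! Fix `0 ≤ θ < δ`. On the set `G` of points `(t, s)` with `m_t(B(s, r)) ≤ r^θ` for all small
`r`, each fibre of `G ∩ B((t, s), ε)` lies in a ball of radius `3ε` around any of its points, so
integrating the conditional measures against `m̄` gives `m(G ∩ B((t, s), ε)) ≤ (3ε)^θ m̄(B(t, 2ε))`.
At a Lebesgue density point of `G` (Besicovitch) the ball `B((t, s), ε)` carries at most twice
that mass, and taking logarithms yields `θ + γ(t) ≤ liminf`. Almost everywhere
`m(B(x, ε)) ≥ ε^(dim + 1)` by differentiating Haar measure against `m`; this bounds the ratios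
from above, without which the real-valued `liminf` would be a junk value. -/

open MeasureTheory Filter Real Set Metric Topology Module ProbabilityTheory
open scoped ENNReal

section LogRatio

variable {f g : ℝ → ℝ}

lemma eventually_le_rpow_of_lt_liminf_log_div_log {a : ℝ}
    (hf : ∀ᶠ ε in 𝓝[>] 0, f ε ∈ Icc 0 1)
    (ha : a < liminf (fun ε => log (f ε) / log ε) (𝓝[>] 0)) :
    ∀ᶠ ε in 𝓝[>] 0, f ε ≤ ε ^ a := by
  have hunit : ∀ᶠ ε in 𝓝[>] (0 : ℝ), ε ∈ Ioo 0 1 := Ioo_mem_nhdsGT one_pos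
  have hbdd : IsBoundedUnder (· ≥ ·) (𝓝[>] 0) fun ε => log (f ε) / log ε := by
    refine isBoundedUnder_of_eventually_ge (a := 0) ?_
    filter_upwards [hf, hunit] with ε hfε hε
    exact div_nonneg_of_nonpos (log_nonpos hfε.1 hfε.2) (log_neg hε.1 hε.2).le
  filter_upwards [eventually_lt_of_lt_liminf ha hbdd, hf, hunit] with ε hlt hfε hε
  rcases hfε.1.eq_or_lt with h0 | hpos
  · rw [← h0]; exact (rpow_pos_of_pos hε.1 a).le
  · rw [lt_div_iff_of_neg (log_neg hε.1 hε.2), ← log_rpow hε.1] at hlt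
    exact ((log_lt_log_iff hpos (rpow_pos_of_pos hε.1 a)).1 hlt).le

lemma le_liminf_log_div_log {D : ℕ} {b C : ℝ} (hC : 0 < C)
    (hlow : ∀ᶠ ε in 𝓝[>] 0, ε ^ D ≤ f ε) (hup : ∀ᶠ ε in 𝓝[>] 0, f ε ≤ C * ε ^ b) :
    b ≤ liminf (fun ε => log (f ε) / log ε) (𝓝[>] 0) := by
  have hunit : ∀ᶠ ε in 𝓝[>] (0 : ℝ), ε ∈ Ioo 0 1 := Ioo_mem_nhdsGT one_pos
  have hlim : Tendsto (fun ε => b + log C / log ε) (𝓝[>] 0) (𝓝 b) := by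
    simpa using tendsto_const_nhds.add (tendsto_const_nhds.div_atBot tendsto_log_nhdsGT_zero)
  have hcobdd : IsCoboundedUnder (· ≥ ·) (𝓝[>] 0) fun ε => log (f ε) / log ε := by
    refine isCoboundedUnder_ge_of_eventually_le (x := (D : ℝ)) _ ?_
    filter_upwards [hlow, hunit] with ε hε hε01
    have hlogε := log_neg hε01.1 hε01.2
    rw [div_le_iff_of_neg hlogε, ← log_pow]
    exact log_le_log (pow_pos hε01.1 D) hε
  rw [← hlim.liminf_eq]
  refine liminf_le_liminf ?_ hlim.isBoundedUnder_ge hcobdd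
  filter_upwards [hlow, hup, hunit] with ε hεlow hεup hε
  have hpow : 0 < ε ^ b := rpow_pos_of_pos hε.1 b
  have hlogε := log_neg hε.1 hε.2
  rw [le_div_iff_of_neg hlogε, add_mul, div_mul_cancel₀ _ hlogε.ne, ← log_rpow hε.1, add_comm,
    ← log_mul hC.ne' hpow.ne']
  exact log_le_log (lt_of_lt_of_le (pow_pos hε.1 D) hεlow) hεup

lemma add_liminf_log_div_log_le {D : ℕ} {θ C c₁ c₂ : ℝ} (hC : 0 < C) (hc₁ : 0 < c₁)
    (hc₂ : 0 < c₂) (hg : ∀ᶠ ε in 𝓝[>] 0, g ε ∈ Icc 0 1) (hlow : ∀ᶠ ε in 𝓝[>] 0, ε ^ D ≤ f ε)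
    (hfg : ∀ᶠ ε in 𝓝[>] 0, f ε ≤ C * (c₁ * ε) ^ θ * g (c₂ * ε)) :
    θ + liminf (fun ε => log (g ε) / log ε) (𝓝[>] 0) ≤
      liminf (fun ε => log (f ε) / log ε) (𝓝[>] 0) := by
  refine le_of_forall_lt_imp_le_of_dense fun b hb => ?_
  have hg_le := eventually_nhdsGT_zero_mul_left hc₂
    (eventually_le_rpow_of_lt_liminf_log_div_log hg (a := b - θ) (by linarith))
  refine le_liminf_log_div_log (C := C * c₁ ^ θ * c₂ ^ (b - θ)) (by positivity) hlow ?_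
  filter_upwards [hfg, hg_le, self_mem_nhdsWithin] with ε hfε hgε (hε : 0 < ε)
  calc f ε ≤ C * (c₁ * ε) ^ θ * (c₂ * ε) ^ (b - θ) :=
        hfε.trans (mul_le_mul_of_nonneg_left hgε (by positivity))
    _ = C * c₁ ^ θ * c₂ ^ (b - θ) * ε ^ b := by
      rw [mul_rpow hc₁.le hε.le, mul_rpow hc₂.le hε.le, ← add_sub_cancel θ b, rpow_add hε,
        add_sub_cancel_left]
      ring

end LogRatio

section Density

lemma Besicovitch.ae_eventually_measure_closedBall_le_two_mul {X : Type*} [MetricSpace X]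
    [MeasurableSpace X] [BorelSpace X] [SecondCountableTopology X] [HasBesicovitchCovering X]
    (μ : Measure X) [IsLocallyFiniteMeasure μ] {s : Set X} (hs : MeasurableSet s) :
    ∀ᵐ x ∂μ, x ∈ s → ∀ᶠ r in 𝓝[>] 0, μ (closedBall x r) ≤ 2 * μ (s ∩ closedBall x r) := by
  filter_upwards [Besicovitch.ae_tendsto_measure_inter_div_of_measurableSet μ hs] with x hx hxs
  rw [indicator_of_mem hxs, Pi.one_apply] at hx
  filter_upwards [hx.eventually_const_lt (ENNReal.inv_lt_one.2 ENNReal.one_lt_two)] with r hr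
  rw [ENNReal.lt_div_iff_mul_lt (.inr (by simp)) (.inr (by simp))] at hr
  calc μ (closedBall x r) = 2 * (2⁻¹ * μ (closedBall x r)) := by
        rw [← mul_assoc, ENNReal.mul_inv_cancel two_ne_zero ENNReal.ofNat_ne_top, one_mul]
    _ ≤ 2 * μ (s ∩ closedBall x r) := by gcongr

variable {E : Type*} [NormedAddCommGroup E] [NormedSpace ℝ E] [FiniteDimensional ℝ E]
  [MeasurableSpace E] [BorelSpace E]

lemma ae_exists_pos_eventually_mul_pow_le_measure_closedBall (μ : Measure E)
    [IsLocallyFiniteMeasure μ] :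
    ∀ᵐ x ∂μ, ∃ c > 0, ∀ᶠ r in 𝓝[>] 0, c * r ^ finrank ℝ E ≤ (μ (closedBall x r)).toReal := by
  let ν : Measure E := Measure.addHaar
  filter_upwards [Besicovitch.ae_tendsto_rnDeriv ν μ, Measure.rnDeriv_lt_top ν μ] with x hx hlt
  set K := ν.rnDeriv μ x + 1
  have hK : K ≠ ⊤ := ENNReal.add_ne_top.2 ⟨hlt.ne, ENNReal.one_ne_top⟩
  have hKpos : 0 < K.toReal := ENNReal.toReal_pos (by simp [K]) hK
  have hv : 0 < (ν (ball 0 1)).toReal :=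
    ENNReal.toReal_pos (measure_ball_pos ν 0 one_pos).ne' measure_ball_lt_top.ne
  refine ⟨(ν (ball 0 1)).toReal / K.toReal, div_pos hv hKpos, ?_⟩
  filter_upwards [hx.eventually_lt_const (ENNReal.lt_add_right hlt.ne one_ne_zero),
    self_mem_nhdsWithin] with r hr (hr0 : 0 < r)
  have hνr : ν (closedBall x r) ≠ 0 := (measure_closedBall_pos ν x hr0).ne'
  rw [ENNReal.div_lt_iff (.inr hνr) (.inl measure_closedBall_lt_top.ne)] at hr
  have hreal := ENNReal.toReal_mono (ENNReal.mul_ne_top hK measure_closedBall_lt_top.ne) hr.le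
  rw [ENNReal.toReal_mul, Measure.addHaar_closedBall ν x hr0.le, ENNReal.toReal_mul,
    ENNReal.toReal_ofReal (by positivity)] at hreal
  rw [div_mul_eq_mul_div, div_le_iff₀ hKpos]
  linarith

lemma ae_eventually_pow_le_measure_ball (μ : Measure E) [IsLocallyFiniteMeasure μ] :
    ∀ᵐ x ∂μ, ∀ᶠ ε in 𝓝[>] 0, ε ^ (finrank ℝ E + 1) ≤ (μ (ball x ε)).toReal := by
  filter_upwards [ae_exists_pos_eventually_mul_pow_le_measure_closedBall μ] with x ⟨c, hc, hx⟩
  filter_upwards [eventually_nhdsGT_zero_mul_left (by norm_num : (0 : ℝ) < 2⁻¹) hx,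
    Ioo_mem_nhdsGT (by positivity : (0 : ℝ) < c * 2⁻¹ ^ finrank ℝ E), self_mem_nhdsWithin]
    with ε hε hεc (hε0 : 0 < ε)
  calc ε ^ (finrank ℝ E + 1) ≤ c * (2⁻¹ * ε) ^ finrank ℝ E := by
        rw [pow_succ, mul_pow, mul_comm, ← mul_assoc]
        exact mul_le_mul_of_nonneg_right hεc.2.le (by positivity)
    _ ≤ (μ (closedBall x (2⁻¹ * ε))).toReal := hε
    _ ≤ (μ (ball x ε)).toReal :=
        ENNReal.toReal_mono measure_ball_lt_top.ne
          (measure_mono (closedBall_subset_ball (by linarith)))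

end Density

section Disintegration

variable {α Y : Type*} [MeasurableSpace α] [MeasurableSpace Y]

lemma ProbabilityTheory.Kernel.measurable_apply_ball [PseudoMetricSpace Y] [OpensMeasurableSpace Y]
    [SecondCountableTopology Y] (κ : Kernel α Y) [IsSFiniteKernel κ] (r : ℝ) :
    Measurable fun x : α × Y => κ x.1 (ball x.2 r) := by
  have hball : MeasurableSet {z : (α × Y) × Y | dist z.2 z.1.2 < r} :=
    measurableSet_lt (by fun_prop) measurable_const
  exact (κ.comap Prod.fst measurable_fst).measurable_kernel_prodMk_left hball

lemma MeasureTheory.Measure.le_mul_fst_of_condKernel_le [StandardBorelSpace Y] [Nonempty Y]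
    (ρ : Measure (α × Y)) [IsFiniteMeasure ρ] {S : Set (α × Y)} {T : Set α} {c : ℝ≥0∞}
    (hS : MeasurableSet S) (hT : MeasurableSet T) (hST : S ⊆ T ×ˢ univ)
    (hc : ∀ t ∈ T, ρ.condKernel t (Prod.mk t ⁻¹' S) ≤ c) :
    ρ S ≤ c * ρ.fst T := by
  have hslice : ∀ t, ρ.condKernel t (Prod.mk t ⁻¹' S) ≤ T.indicator (fun _ => c) t := by
    intro t
    by_cases ht : t ∈ T
    · simpa [indicator_of_mem ht] using hc t ht
    · have : Prod.mk t ⁻¹' S = ∅ := eq_empty_of_forall_notMem fun y hy => ht (hST hy).1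
      simp [this]
  calc ρ S = ∫⁻ t, ρ.condKernel t (Prod.mk t ⁻¹' S) ∂ρ.fst := by
        conv_lhs => rw [← ρ.disintegrate ρ.condKernel]
        exact Measure.compProd_apply hS
    _ ≤ ∫⁻ t, T.indicator (fun _ => c) t ∂ρ.fst := lintegral_mono hslice
    _ = c * ρ.fst T := lintegral_indicator_const hT c

end Disintegration

section ConditionalDimension

variable {X Y : Type*} [MeasurableSpace X] [MeasurableSpace Y] [MetricSpace Y]
  [StandardBorelSpace Y] [Nonempty Y] (m : Measure (X × Y)) [IsFiniteMeasure m] {θ : ℝ}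

/-- Rational radii keep this set measurable. -/
def condKernelBallBoundSet (θ : ℝ) (k : ℕ) : Set (X × Y) :=
  {x | ∀ r : ℚ, 0 < r → (r : ℝ) < 1 / (k + 1) →
    (m.condKernel x.1 (ball x.2 r)).toReal ≤ (r : ℝ) ^ θ}

lemma measurableSet_condKernelBallBoundSet [OpensMeasurableSpace Y] [SecondCountableTopology Y]
    (k : ℕ) :
    MeasurableSet (condKernelBallBoundSet m θ k) := by
  simp only [condKernelBallBoundSet, ofPred_forall]
  exact .iInter fun r => .iInter fun _ => .iInter fun _ =>
    measurableSet_le (m.condKernel.measurable_apply_ball r).ennreal_toReal measurable_const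

lemma ae_exists_mem_condKernelBallBoundSet
    (hcond : ∀ᵐ x ∂m, ∀ᶠ ε in 𝓝[>] 0, (m.condKernel x.1 (ball x.2 ε)).toReal ≤ ε ^ θ) :
    ∀ᵐ x ∂m, ∃ k, x ∈ condKernelBallBoundSet m θ k := by
  filter_upwards [hcond] with x hx
  obtain ⟨ε₀, hε₀, hx⟩ := (nhdsGT_basis 0).eventually_iff.1 hx
  obtain ⟨k, hk⟩ := exists_nat_one_div_lt hε₀
  exact ⟨k, fun r hr hrk => hx ⟨Rat.cast_pos.2 hr, hrk.trans hk⟩⟩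

lemma measure_condKernelBallBoundSet_inter_closedBall_le [PseudoMetricSpace X]
    [OpensMeasurableSpace X] [OpensMeasurableSpace Y] [SecondCountableTopology Y] (hθ : 0 ≤ θ)
    {k : ℕ} (x : X × Y) {ε : ℝ} (hε : 0 < ε) (hεk : 3 * ε < 1 / (k + 1)) :
    m (condKernelBallBoundSet m θ k ∩ closedBall x ε) ≤
      ENNReal.ofReal ((3 * ε) ^ θ) * m.fst (closedBall x.1 ε) := by
  rw [← closedBall_prod_same]
  refine m.le_mul_fst_of_condKernel_le ((measurableSet_condKernelBallBoundSet m k).inter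
    (measurableSet_closedBall.prod measurableSet_closedBall)) measurableSet_closedBall
    (inter_subset_right.trans (prod_mono subset_rfl (subset_univ _))) fun t ht => ?_
  rcases eq_empty_or_nonempty (Prod.mk t ⁻¹' (condKernelBallBoundSet m θ k ∩
    closedBall x.1 ε ×ˢ closedBall x.2 ε)) with hempty | ⟨s, hsG, hs⟩
  · simp [hempty]
  obtain ⟨r, hr2, hr3⟩ := exists_rat_btwn (by linarith : 2 * ε < 3 * ε)
  have hsub : Prod.mk t ⁻¹' (condKernelBallBoundSet m θ k ∩
      closedBall x.1 ε ×ˢ closedBall x.2 ε) ⊆ ball s r := fun y hy => by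
    have hy₂ : dist y x.2 ≤ ε := (mem_prod.1 hy.2).2
    have hs₂ : dist s x.2 ≤ ε := (mem_prod.1 hs).2
    rw [mem_ball]
    linarith [dist_triangle_right y s x.2]
  have hr0 : (0 : ℝ) < r := by linarith
  calc _ ≤ m.condKernel t (ball s r) := measure_mono hsub
    _ ≤ ENNReal.ofReal ((r : ℝ) ^ θ) := (ENNReal.le_ofReal_iff_toReal_le (measure_ne_top _ _)
        (by positivity)).2 (hsG r (Rat.cast_pos.1 hr0) (by linarith))
    _ ≤ ENNReal.ofReal ((3 * ε) ^ θ) :=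
        ENNReal.ofReal_le_ofReal (rpow_le_rpow hr0.le hr3.le hθ)

lemma ae_eventually_measure_ball_le_mul_fst_ball [MetricSpace X] [BorelSpace X] [BorelSpace Y]
    [SecondCountableTopology X] [SecondCountableTopology Y] [HasBesicovitchCovering (X × Y)]
    (hθ : 0 ≤ θ)
    (hcond : ∀ᵐ x ∂m, ∀ᶠ ε in 𝓝[>] 0, (m.condKernel x.1 (ball x.2 ε)).toReal ≤ ε ^ θ) :
    ∀ᵐ x ∂m, ∀ᶠ ε in 𝓝[>] 0,
      (m (ball x ε)).toReal ≤ 2 * (3 * ε) ^ θ * (m.fst (ball x.1 (2 * ε))).toReal := by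
  filter_upwards [ae_exists_mem_condKernelBallBoundSet m hcond, ae_all_iff.2 fun k =>
    Besicovitch.ae_eventually_measure_closedBall_le_two_mul m
      (measurableSet_condKernelBallBoundSet m (θ := θ) k)] with x ⟨k, hxk⟩ hdensity
  filter_upwards [hdensity k hxk, Ioo_mem_nhdsGT (by positivity : (0 : ℝ) < 1 / (k + 1) / 3)]
    with ε hε ⟨hε0, hεk⟩
  have hbound : m (ball x ε) ≤
      2 * (ENNReal.ofReal ((3 * ε) ^ θ) * m.fst (ball x.1 (2 * ε))) :=
    calc m (ball x ε) ≤ m (closedBall x ε) := measure_mono ball_subset_closedBall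
      _ ≤ 2 * m (condKernelBallBoundSet m θ k ∩ closedBall x ε) := hε
      _ ≤ 2 * (ENNReal.ofReal ((3 * ε) ^ θ) * m.fst (closedBall x.1 ε)) := by
        gcongr
        exact measure_condKernelBallBoundSet_inter_closedBall_le m hθ x hε0 (by linarith)
      _ ≤ 2 * (ENNReal.ofReal ((3 * ε) ^ θ) * m.fst (ball x.1 (2 * ε))) := by
        gcongr
        exact closedBall_subset_ball (by linarith)
  have := ENNReal.toReal_mono (by finiteness) hbound
  rwa [ENNReal.toReal_mul, ENNReal.toReal_mul, ENNReal.toReal_ofReal (by positivity),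
    ENNReal.toReal_ofNat, ← mul_assoc] at this

end ConditionalDimension

theorem stmt6_general (p q : ℕ)
    (m : Measure (EuclideanSpace ℝ (Fin p) × EuclideanSpace ℝ (Fin q)))
    [IsProbabilityMeasure m]
    (γ : EuclideanSpace ℝ (Fin p) → ℝ)
    (hγ : ∀ t, γ t =
      liminf (fun ε : ℝ =>
        Real.log ((m.fst (Metric.ball t ε)).toReal) / Real.log ε)
        (nhdsWithin 0 (Set.Ioi 0)))
    (δ : ℝ)
    (hcond : ∀ᵐ x ∂m, δ ≤
      liminf (fun ε : ℝ =>
        Real.log ((m.condKernel x.1 (Metric.ball x.2 ε)).toReal) / Real.log ε)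
        (nhdsWithin 0 (Set.Ioi 0))) :
    ∀ᵐ x ∂m, δ + γ x.1 ≤
      liminf (fun ε : ℝ =>
        Real.log ((m (Metric.ball x ε)).toReal) / Real.log ε)
        (nhdsWithin 0 (Set.Ioi 0)) := by
  have hcondθ (n : ℕ) : ∀ᵐ x ∂m, ∀ᶠ ε in 𝓝[>] 0,
      (m.condKernel x.1 (ball x.2 ε)).toReal ≤ ε ^ max 0 (δ - 1 / (n + 1)) := by
    rcases max_choice 0 (δ - 1 / (n + 1)) with h | h <;> rw [h]
    · exact ae_of_all _ fun x => .of_forall fun ε => by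
        rw [rpow_zero]; exact measureReal_le_one
    · filter_upwards [hcond] with x hx
      exact eventually_le_rpow_of_lt_liminf_log_div_log (.of_forall fun ε =>
        ⟨ENNReal.toReal_nonneg, measureReal_le_one⟩)
        (by linarith [Nat.one_div_pos_of_nat (α := ℝ) (n := n)])
  filter_upwards [ae_eventually_pow_le_measure_ball m, ae_all_iff.2 fun n =>
    ae_eventually_measure_ball_le_mul_fst_ball m (le_max_left _ _) (hcondθ n)] with x hlow hK
  refine le_of_forall_pos_le_add fun η hη => ?_
  obtain ⟨n, hn⟩ := exists_nat_one_div_lt hη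
  have hfst : ∀ᶠ ε in 𝓝[>] 0, (m.fst (ball x.1 ε)).toReal ∈ Icc 0 1 :=
    .of_forall fun ε => ⟨ENNReal.toReal_nonneg, measureReal_le_one⟩
  have := add_liminf_log_div_log_le two_pos three_pos two_pos hfst hlow (hK n)
  rw [hγ]
  linarith [le_max_right 0 (δ - 1 / (n + 1))]

/-- Ledrappier–Young lemma on lower pointwise dimensions: if `m` is a probability measure on
`ℝᵖ × ℝᵠ`, `m̄ = π_* m` its projection to the first factor with lower pointwise dimension
`γ(t)`, and the conditional measures `m_t` of the Rokhlin disintegration have lower pointwise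
dimension at least `δ ≥ 0` at `m`-a.e. point, then the lower pointwise dimension of `m` at
`m`-a.e. `(t,s)` is at least `δ + γ(t)` (balls in the product are for the max metric). -/
theorem stmt6 (p q : ℕ)
    (m : Measure (EuclideanSpace ℝ (Fin p) × EuclideanSpace ℝ (Fin q)))
    [IsProbabilityMeasure m]
    (γ : EuclideanSpace ℝ (Fin p) → ℝ)
    (hγ : ∀ t, γ t =
      liminf (fun ε : ℝ =>
        Real.log ((m.fst (Metric.ball t ε)).toReal) / Real.log ε)
        (nhdsWithin 0 (Set.Ioi 0)))
    (δ : ℝ) (hδ : 0 ≤ δ)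
    (hcond : ∀ᵐ x ∂m, δ ≤
      liminf (fun ε : ℝ =>
        Real.log ((m.condKernel x.1 (Metric.ball x.2 ε)).toReal) / Real.log ε)
        (nhdsWithin 0 (Set.Ioi 0))) :
    ∀ᵐ x ∂m, δ + γ x.1 ≤
      liminf (fun ε : ℝ =>
        Real.log ((m (Metric.ball x ε)).toReal) / Real.log ε)
        (nhdsWithin 0 (Set.Ioi 0)) :=
  stmt6_general p q m γ hγ δ hcond
end

section
/- Let α and Ω be standard Borel spaces and ρ a Borel probability measure on α × Ω with disintegration (ρ_a)_{a∈α} over the first coordinate. Let T : α × Ω → α × Ω be measurable of the form T(a,ω) = (g(a), h(a,ω)), where g : α → α is a measurable bijection with measurable inverse, and assume ρ is T-invariant and T-ergodic. If for ρ.fst-almost every a the conditional measure ρ_a is purely atomic, then there exist δ₀ > 0 and a natural number k with δ₀ = 1/k such that for ρ.fst-almost every a, every atom of ρ_a has measure exactly δ₀ and ρ_a has exactly k atoms. -/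
/-!
Write `φ(a, ω) = ρ_a {ω}` for the weight of the atom of `ρ_a` at `ω`. By invariance of `ρ` and
uniqueness of the disintegration, `ρ_{g a} = h(a, ·)_* ρ_a` for a.e. `a`, so `T` sends an atom of
weight `δ` to an atom of weight at least `δ`: `φ ≤ φ ∘ T` almost everywhere. As `T` preserves `ρ`
and `φ ≤ 1` is integrable, this forces `φ ∘ T = φ` a.e., and ergodicity makes `φ` a.e. equal to a
constant `δ₀`. Hence almost every `ρ_a`, being carried by its atoms, has all atoms of weight `δ₀`,
so it has exactly `1 / δ₀` of them.
-/

open MeasureTheory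

/-- A measure on `Ω` is purely atomic if it is carried by a countable set. -/
def PurelyAtomic {Ω : Type*} [MeasurableSpace Ω] (μ : Measure Ω) : Prop :=
  ∃ S : Set Ω, S.Countable ∧ μ Sᶜ = 0

open ProbabilityTheory Filter
open scoped ENNReal

section Ergodic

variable {X : Type*} [MeasurableSpace X] {μ : Measure X} {f : X → X}

theorem PreErgodic.of_prob_eq_zero_or_one [IsProbabilityMeasure μ]
    (h : ∀ s, MeasurableSet s → f ⁻¹' s = s → μ s = 0 ∨ μ s = 1) : PreErgodic f μ where
  aeconst_set s hs hfs := eventuallyConst_set'.2 <| (h s hs hfs).imp ae_eq_empty.2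
    fun h1 ↦ ae_eq_univ.2 ((prob_compl_eq_zero_iff hs).2 h1)

theorem MeasureTheory.MeasurePreserving.comp_ae_eq_of_ae_le_comp (hf : MeasurePreserving f μ μ)
    {u : X → ℝ≥0∞} (hu : Measurable u) (hfin : ∫⁻ x, u x ∂μ ≠ ∞) (hle : u ≤ᵐ[μ] u ∘ f) :
    u ∘ f =ᵐ[μ] u :=
  (ae_eq_of_ae_le_of_lintegral_le hle hfin (hu.comp hf.measurable).aemeasurable
    (hf.lintegral_comp hu).le).symm

theorem Ergodic.ae_eq_const_of_ae_le_comp (hf : Ergodic f μ) {u : X → ℝ≥0∞} (hu : Measurable u)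
    (hfin : ∫⁻ x, u x ∂μ ≠ ∞) (hle : u ≤ᵐ[μ] u ∘ f) : ∃ c, u =ᵐ[μ] Function.const X c :=
  hf.ae_eq_const_of_ae_eq_comp_ae hu.aestronglyMeasurable
    (hf.toMeasurePreserving.comp_ae_eq_of_ae_le_comp hu hfin hle)

end Ergodic

section Atoms

variable {Ω : Type*} [MeasurableSpace Ω] {μ : Measure Ω}

theorem PurelyAtomic.ae_measure_singleton_ne_zero (hμ : PurelyAtomic μ) :
    ∀ᵐ ω ∂μ, μ {ω} ≠ 0 := by
  obtain ⟨S, hS, hSc⟩ := hμ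
  have hnull : μ (S ∩ {ω | μ {ω} = 0}) = 0 := by
    rw [← Set.biUnion_of_singleton (S ∩ _)]
    exact (measure_biUnion_null_iff (hS.mono Set.inter_subset_left)).2 fun ω hω ↦ hω.2
  refine measure_mono_null (fun ω hω ↦ ?_) (measure_union_null hnull hSc)
  by_cases hωS : ω ∈ S
  · exact Or.inl ⟨hωS, not_not.1 hω⟩
  · exact Or.inr hωS

theorem Filter.Eventually.of_measure_singleton_ne_zero {p : Ω → Prop} (h : ∀ᵐ ω ∂μ, p ω)
    {ω : Ω} (hω : μ {ω} ≠ 0) : p ω := by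
  by_contra hp
  exact hω (measure_mono_null (Set.singleton_subset_iff.2 hp) (ae_iff.1 h))

theorem MeasureTheory.Measure.finite_setOf_le_measure_singleton [IsFiniteMeasure μ]
    [MeasurableSingletonClass Ω] {c : ℝ≥0∞} (hc : c ≠ 0) : {ω | c ≤ μ {ω}}.Finite :=
  Measure.finite_const_le_meas_of_disjoint_iUnion μ (pos_iff_ne_zero.2 hc)
    (fun _ ↦ MeasurableSet.singleton _)
    (fun _ _ hne ↦ Set.disjoint_singleton.2 hne) (measure_ne_top _ _)

theorem PurelyAtomic.atoms_of_ae_measure_singleton_eq [IsProbabilityMeasure μ]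
    [MeasurableSingletonClass Ω] (hμ : PurelyAtomic μ) {c : ℝ≥0∞}
    (hc : ∀ᵐ ω ∂μ, μ {ω} = c) :
    (∀ ω, μ {ω} ≠ 0 → μ {ω} = c) ∧ {ω | μ {ω} ≠ 0}.Finite ∧
      c = ({ω | μ {ω} ≠ 0}.ncard : ℝ≥0∞)⁻¹ := by
  have hatoms := hμ.ae_measure_singleton_ne_zero
  have hweight : ∀ ω, μ {ω} ≠ 0 → μ {ω} = c := fun _ ↦ hc.of_measure_singleton_ne_zero
  have hc0 : c ≠ 0 := by
    obtain ⟨ω, hω, hωc⟩ := (hatoms.and hc).exists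
    exact hωc ▸ hω
  have hfin : {ω | μ {ω} ≠ 0}.Finite :=
    (Measure.finite_setOf_le_measure_singleton hc0).subset fun ω hω ↦ (hweight ω hω).ge
  refine ⟨hweight, hfin, ENNReal.eq_inv_of_mul_eq_one_left ?_⟩
  calc c * {ω | μ {ω} ≠ 0}.ncard = ∑ ω ∈ hfin.toFinset, μ {ω} := by
        rw [Finset.sum_congr rfl fun ω hω ↦ hweight ω (hfin.mem_toFinset.1 hω),
          Finset.sum_const, nsmul_eq_mul, mul_comm, Set.ncard_eq_toFinset_card _ hfin]
    _ = μ {ω | μ {ω} ≠ 0} := by rw [sum_measure_singleton, hfin.coe_toFinset]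
    _ = 1 := (prob_compl_eq_zero_iff hfin.measurableSet).1 (ae_iff.1 hatoms)

end Atoms

section Disintegration

variable {α Ω : Type*} [MeasurableSpace α] [MeasurableSpace Ω]

theorem ProbabilityTheory.Kernel.measurable_apply_singleton [MeasurableEq Ω] (κ : Kernel α Ω)
    [IsSFiniteKernel κ] : Measurable fun p : α × Ω ↦ κ p.1 {p.2} := by
  have hdiag : MeasurableSet {q : (α × Ω) × Ω | q.2 = q.1.2} :=
    measurableSet_eq_fun measurable_snd (measurable_snd.comp measurable_fst)
  exact Kernel.measurable_kernel_prodMk_left (κ := κ.comap Prod.fst measurable_fst) hdiag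

variable [StandardBorelSpace Ω] [Nonempty Ω]

theorem MeasureTheory.Measure.condKernel_map_fiberwise {ρ ρ' : Measure (α × Ω)}
    [IsFiniteMeasure ρ] [IsFiniteMeasure ρ'] (g : α ≃ᵐ α) {h : α × Ω → Ω} (hh : Measurable h)
    (hρ' : ρ.map (fun p ↦ (g p.1, h p)) = ρ') :
    ∀ᵐ a ∂ρ.fst, ρ'.condKernel (g a) = (ρ.condKernel a).map fun ω ↦ h (a, ω) := by
  have hsec (a : α) : Measurable fun ω ↦ h (a, ω) := hh.comp measurable_prodMk_left
  have hT : Measurable fun p : α × Ω ↦ (g p.1, h p) := (g.measurable.comp measurable_fst).prodMk hh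
  let κ : Kernel α Ω :=
    { toFun b := (ρ.condKernel (g.symm b)).map fun ω ↦ h (g.symm b, ω)
      measurable' := Measure.measurable_of_measurable_coe _ fun s hs ↦ by
        simp_rw [Measure.map_apply (hsec _) hs]
        exact (Kernel.measurable_kernel_prodMk_left (hh hs)).comp g.symm.measurable }
  have hκ (a : α) : κ (g a) = (ρ.condKernel a).map fun ω ↦ h (a, ω) := by
    simp [κ]
  have : IsMarkovKernel κ :=
    ⟨fun b ↦ (ρ.condKernel (g.symm b)).isProbabilityMeasure_map (hsec _).aemeasurable⟩
  have hfst : ρ'.fst = ρ.fst.map g := by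
    rw [← hρ', Measure.fst, Measure.fst, Measure.map_map measurable_fst hT,
      Measure.map_map g.measurable measurable_fst]
    rfl
  have hdisint : ρ' = ρ'.fst ⊗ₘ κ := by
    ext s hs
    rw [Measure.compProd_apply hs, hfst, lintegral_map (Kernel.measurable_kernel_prodMk_left hs)
      g.measurable, ← hρ', Measure.map_apply hT hs]
    conv_lhs => rw [← ρ.disintegrate ρ.condKernel]
    rw [Measure.compProd_apply (hT hs)]
    refine lintegral_congr fun a ↦ ?_
    rw [hκ, Measure.map_apply (hsec a) (measurable_prodMk_left hs)]
    rfl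
  filter_upwards [ae_of_ae_map g.measurable.aemeasurable
    (hfst ▸ eq_condKernel_of_measure_eq_compProd κ hdisint)] with a ha
  rw [← ha, hκ]

theorem MeasureTheory.Measure.ae_condKernel_singleton_le_of_map_eq {ρ : Measure (α × Ω)}
    [IsFiniteMeasure ρ] (g : α ≃ᵐ α) {h : α × Ω → Ω} (hh : Measurable h)
    (hinv : ρ.map (fun p ↦ (g p.1, h p)) = ρ) :
    ∀ᵐ p ∂ρ, ρ.condKernel p.1 {p.2} ≤ ρ.condKernel (g p.1) {h p} := by
  have hfst : MeasurePreserving Prod.fst ρ ρ.fst := ⟨measurable_fst, rfl⟩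
  filter_upwards [hfst.quasiMeasurePreserving.ae (condKernel_map_fiberwise g hh hinv)] with p hp
  rw [hp, Measure.map_apply (f := fun ω ↦ h (p.1, ω)) (hh.comp measurable_prodMk_left)
    (MeasurableSet.singleton _)]
  exact measure_mono (Set.singleton_subset_iff.2 rfl)

end Disintegration

theorem stmt9_general
    {α Ω : Type*}
    [MeasurableSpace α]
    [MeasurableSpace Ω] [StandardBorelSpace Ω] [Nonempty Ω]
    (ρ : Measure (α × Ω)) [IsProbabilityMeasure ρ]
    (g : α ≃ᵐ α) (h : α × Ω → Ω) (hh : Measurable h)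
    (T : α × Ω → α × Ω) (hT : T = fun p => (g p.1, h p))
    (hinv : Measure.map T ρ = ρ)
    (herg : ∀ E : Set (α × Ω), MeasurableSet E → T ⁻¹' E = E → ρ E = 0 ∨ ρ E = 1)
    (hatomic : ∀ᵐ a ∂ρ.fst, PurelyAtomic (ρ.condKernel a)) :
    ∃ δ₀ : ENNReal, 0 < δ₀ ∧ ∃ k : ℕ, δ₀ = 1 / (k : ENNReal) ∧
      ∀ᵐ a ∂ρ.fst,
        (∀ ω : Ω, ρ.condKernel a {ω} ≠ 0 → ρ.condKernel a {ω} = δ₀) ∧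
        {ω : Ω | ρ.condKernel a {ω} ≠ 0}.Finite ∧
        {ω : Ω | ρ.condKernel a {ω} ≠ 0}.ncard = k := by
  subst hT
  have hTm : Measurable fun p : α × Ω ↦ (g p.1, h p) := (g.measurable.comp measurable_fst).prodMk hh
  have hergodic : Ergodic (fun p : α × Ω ↦ (g p.1, h p)) ρ :=
    ⟨⟨hTm, hinv⟩, PreErgodic.of_prob_eq_zero_or_one herg⟩
  obtain ⟨c, hc⟩ := hergodic.ae_eq_const_of_ae_le_comp ρ.condKernel.measurable_apply_singleton
    (ne_top_of_le_ne_top (by simp) (lintegral_mono fun _ ↦ prob_le_one))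
    (Measure.ae_condKernel_singleton_le_of_map_eq g hh hinv)
  have hfibre : ∀ᵐ a ∂ρ.fst, ∀ᵐ ω ∂ρ.condKernel a, ρ.condKernel a {ω} = c := by
    refine Measure.ae_ae_of_ae_compProd (p := fun p ↦ ρ.condKernel p.1 {p.2} = c) ?_
    rwa [ρ.disintegrate ρ.condKernel]
  have hatoms := (hatomic.and hfibre).mono fun a ha ↦ ha.1.atoms_of_ae_measure_singleton_eq ha.2
  obtain ⟨a₀, -, -, hk⟩ := hatoms.exists
  refine ⟨c, hk ▸ ENNReal.inv_pos.2 (ENNReal.natCast_ne_top _), _, by rw [one_div, hk], ?_⟩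
  filter_upwards [hatoms] with a ⟨hweight, hfin, hcard⟩
  exact ⟨hweight, hfin, by exact_mod_cast inv_inj.1 (hcard.symm.trans hk)⟩

/-- If a fibered map `T(a,ω) = (g a, h (a,ω))`, with `g` a measurable bijection with measurable
inverse, preserves a probability measure `ρ` on a product of standard Borel spaces and is
ergodic for `ρ`, and if the Rokhlin conditional measures `ρ_a` are purely atomic for
`ρ.fst`-a.e. `a`, then there are `δ₀ > 0` and `k ∈ ℕ` with `δ₀ = 1/k` such that for
`ρ.fst`-a.e. `a` every atom of `ρ_a` has weight exactly `δ₀` and `ρ_a` has exactly `k` atoms. -/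
theorem stmt9
    {α Ω : Type*}
    [MeasurableSpace α] [StandardBorelSpace α] [Nonempty α]
    [MeasurableSpace Ω] [StandardBorelSpace Ω] [Nonempty Ω]
    (ρ : Measure (α × Ω)) [IsProbabilityMeasure ρ]
    (g : α ≃ᵐ α) (h : α × Ω → Ω) (hh : Measurable h)
    (T : α × Ω → α × Ω) (hT : T = fun p => (g p.1, h p))
    (hinv : Measure.map T ρ = ρ)
    (herg : ∀ E : Set (α × Ω), MeasurableSet E → T ⁻¹' E = E → ρ E = 0 ∨ ρ E = 1)
    (hatomic : ∀ᵐ a ∂ρ.fst, PurelyAtomic (ρ.condKernel a)) :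
    ∃ δ₀ : ENNReal, 0 < δ₀ ∧ ∃ k : ℕ, δ₀ = 1 / (k : ENNReal) ∧
      ∀ᵐ a ∂ρ.fst,
        (∀ ω : Ω, ρ.condKernel a {ω} ≠ 0 → ρ.condKernel a {ω} = δ₀) ∧
        {ω : Ω | ρ.condKernel a {ω} ≠ 0}.Finite ∧
        {ω : Ω | ρ.condKernel a {ω} ≠ 0}.ncard = k :=
  stmt9_general ρ g h hh T hT hinv herg hatomic
end

section
/- Let α be a standard Borel space and ρ a Borel probability measure on α × ℝ with disintegration (ρ_a)_{a∈α} over the first coordinate. Let T : α × ℝ → α × ℝ be measurable of the form T(a,ω) = (g(a), h(a,ω)), where g : α → α is a measurable bijection with measurable inverse and, for each a, the map ω ↦ h(a,ω) is a strictly increasing homeomorphism of ℝ. If ρ is T-invariant and T-ergodic, then for ρ.fst-almost every a the conditional measure ρ_a is a Dirac mass at a single point. -/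
open MeasureTheory ProbabilityTheory Set

noncomputable def pushKernel {α : Type*} [MeasurableSpace α]
    (ρ : Measure (α × ℝ)) [IsFiniteMeasure ρ] (g : α ≃ᵐ α) (h : α → ℝ ≃ₜ ℝ)
    (hh : Measurable fun p : α × ℝ => h p.1 p.2) : Kernel α ℝ where
  toFun b := Measure.map (h (g.symm b)) (ρ.condKernel (g.symm b))
  measurable' := by
    apply Measure.measurable_of_measurable_coe
    intro s hs
    have heq : ∀ b, Measure.map (h (g.symm b)) (ρ.condKernel (g.symm b)) s
        = ρ.condKernel (g.symm b) (Prod.mk (g.symm b) ⁻¹' {p : α × ℝ | h p.1 p.2 ∈ s}) := by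
      intro b
      rw [Measure.map_apply (h (g.symm b)).continuous.measurable hs]
      rfl
    simp_rw [heq]
    exact (Kernel.measurable_kernel_prodMk_left (hh hs)).comp g.symm.measurable

lemma pushKernel_apply {α : Type*} [MeasurableSpace α]
    (ρ : Measure (α × ℝ)) [IsFiniteMeasure ρ] (g : α ≃ᵐ α) (h : α → ℝ ≃ₜ ℝ)
    (hh : Measurable fun p : α × ℝ => h p.1 p.2) (b : α) :
    pushKernel ρ g h hh b = Measure.map (h (g.symm b)) (ρ.condKernel (g.symm b)) := rfl

instance pushKernel_markov {α : Type*} [MeasurableSpace α]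
    (ρ : Measure (α × ℝ)) [IsFiniteMeasure ρ] (g : α ≃ᵐ α) (h : α → ℝ ≃ₜ ℝ)
    (hh : Measurable fun p : α × ℝ => h p.1 p.2) : IsMarkovKernel (pushKernel ρ g h hh) := by
  constructor
  intro b
  rw [pushKernel_apply]
  exact Measure.isProbabilityMeasure_map (h (g.symm b)).continuous.measurable.aemeasurable


lemma dirac_of_ae_cdf_const (μ : Measure ℝ) [IsProbabilityMeasure μ] (c : ENNReal)
    (hc : ∀ᵐ ω ∂μ, μ (Set.Iio ω) = c) : ∃ x, μ = Measure.dirac x := by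
  set S : Set ℝ := {ω | μ (Set.Iio ω) = c} with hSdef
  have hSc : μ Sᶜ = 0 := hc
  -- between two points of S the measure vanishes
  have hIoo : ∀ u ∈ S, ∀ v ∈ S, μ (Set.Ioo u v) = 0 := by
    intro u hu v hv
    rcases le_or_gt v u with huv | huv
    · simp [Set.Ioo_eq_empty_of_le huv]
    · have hIco : μ (Set.Ico u v) = 0 := by
        have hdiff : Set.Ico u v = Set.Iio v \ Set.Iio u := by
          ext x; simp only [Set.mem_Ico, Set.mem_diff, Set.mem_Iio, not_lt]; tauto
        rw [hdiff, measure_diff (Set.Iio_subset_Iio huv.le)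
          measurableSet_Iio.nullMeasurableSet (measure_ne_top μ _), hu, hv, tsub_self]
      exact measure_mono_null Set.Ioo_subset_Ico_self hIco
  -- the set of "interior" points of S is null
  set C : Set (Set ℝ) := {s | ∃ u ∈ S, ∃ v ∈ S, s = Set.Ioo u v} with hCdef
  have hCopen : ∀ s ∈ C, IsOpen s := by rintro s ⟨u, _, v, _, rfl⟩; exact isOpen_Ioo
  obtain ⟨T, hTc, hTC, hTeq⟩ := TopologicalSpace.isOpen_sUnion_countable C hCopen
  have hD : μ (⋃₀ C) = 0 := by
    rw [← hTeq, measure_sUnion_null_iff hTc]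
    intro s hs
    obtain ⟨u, hu, v, hv, rfl⟩ := hTC hs
    exact hIoo u hu v hv
  -- extreme points
  set E₁ : Set ℝ := S ∩ lowerBounds S with hE₁def
  set E₂ : Set ℝ := S ∩ upperBounds S with hE₂def
  have hsub₁ : E₁.Subsingleton := fun x hx y hy => le_antisymm (hx.2 hy.1) (hy.2 hx.1)
  have hsub₂ : E₂.Subsingleton := fun x hx y hy => le_antisymm (hy.2 hx.1) (hx.2 hy.1)
  have hcover : (Set.univ : Set ℝ) ⊆ Sᶜ ∪ (⋃₀ C ∪ (E₁ ∪ E₂)) := by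
    intro ω _
    by_cases hω : ω ∈ S
    · by_cases hl : ∃ u ∈ S, u < ω
      · by_cases hr : ∃ v ∈ S, ω < v
        · obtain ⟨u, hu, hul⟩ := hl; obtain ⟨v, hv, hvr⟩ := hr
          exact Or.inr <| Or.inl ⟨Set.Ioo u v, ⟨u, hu, v, hv, rfl⟩, hul, hvr⟩
        · push_neg at hr
          exact Or.inr <| Or.inr <| Or.inr ⟨hω, fun v hv => hr v hv⟩
      · push_neg at hl
        exact Or.inr <| Or.inr <| Or.inl ⟨hω, fun u hu => hl u hu⟩
    · exact Or.inl hω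
  have hone : (1 : ENNReal) ≤ μ (E₁ ∪ E₂) := by
    calc (1 : ENNReal) = μ Set.univ := measure_univ.symm
      _ ≤ μ (Sᶜ ∪ (⋃₀ C ∪ (E₁ ∪ E₂))) := measure_mono hcover
      _ ≤ μ Sᶜ + (μ (⋃₀ C) + μ (E₁ ∪ E₂)) :=
          le_trans (measure_union_le _ _) (by gcongr; exact measure_union_le _ _)
      _ = μ (E₁ ∪ E₂) := by rw [hSc, hD]; simp
  -- a point of full measure gives the dirac
  suffices hx : ∃ x, μ {x} = 1 by
    obtain ⟨x, hx⟩ := hx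
    refine ⟨x, ?_⟩
    ext s hs
    rw [Measure.dirac_apply' _ hs]
    by_cases hxs : x ∈ s
    · have h1 : (1 : ENNReal) ≤ μ s := hx ▸ measure_mono (Set.singleton_subset_iff.2 hxs)
      simp [Set.indicator_of_mem hxs, le_antisymm prob_le_one h1]
    · have hcompl : μ {x}ᶜ = 0 := (prob_compl_eq_zero_iff (measurableSet_singleton x)).2 hx
      have h0 : μ s = 0 := measure_mono_null (fun y hy => by
        simp only [Set.mem_compl_iff, Set.mem_singleton_iff]
        rintro rfl; exact hxs hy) hcompl
      simp [Set.indicator_of_notMem hxs, h0]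
  -- find the full-measure point among the extremes
  rcases Set.eq_empty_or_nonempty E₁ with hE₁e | ⟨x, hx⟩
  · rcases Set.eq_empty_or_nonempty E₂ with hE₂e | ⟨y, hy⟩
    · rw [hE₁e, hE₂e] at hone; simp at hone
    · refine ⟨y, le_antisymm prob_le_one (le_trans hone (measure_mono ?_))⟩
      rw [hE₁e]
      simpa using fun z hz => hsub₂ hz hy
  · rcases Set.eq_empty_or_nonempty E₂ with hE₂e | ⟨y, hy⟩
    · refine ⟨x, le_antisymm prob_le_one (le_trans hone (measure_mono ?_))⟩
      rw [hE₂e]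
      simpa using fun z hz => hsub₁ hz hx
    · rcases eq_or_ne x y with rfl | hxy
      · refine ⟨x, le_antisymm prob_le_one (le_trans hone (measure_mono ?_))⟩
        rintro z (hz | hz)
        · exact hsub₁ hz hx
        · exact hsub₂ hz hy
      · have hxlty : x < y := lt_of_le_of_ne (hx.2 hy.1) hxy
        by_cases hμx : μ {x} = 0
        · refine ⟨y, le_antisymm prob_le_one (le_trans hone ?_)⟩
          have : μ (E₁ ∪ E₂) ≤ μ {x} + μ {y} := le_trans
            (measure_mono (Set.union_subset_union (fun z hz => hsub₁ hz hx)
              (fun z hz => hsub₂ hz hy))) (measure_union_le _ _)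
          rwa [hμx, zero_add] at this
        · exfalso
          have hcx : c = 0 := by
            have hsubc : Set.Iio x ⊆ Sᶜ := by
              intro ω hω hωS
              exact absurd (hx.2 hωS) (not_le.2 hω)
            have h0 := measure_mono_null hsubc hSc
            have hxS : μ (Set.Iio x) = c := hx.1
            rw [← hxS]; exact h0
          have hcy : 0 < c := by
            have hle : μ {x} ≤ μ (Set.Iio y) := measure_mono (by simpa using hxlty)
            have hyS : μ (Set.Iio y) = c := hy.1
            rw [hyS] at hle
            exact lt_of_lt_of_le (pos_iff_ne_zero.2 hμx) hle
          exact absurd hcx (ne_of_gt hcy)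


/-- If `T(a,ω) = (g a, h_a(ω))` preserves an ergodic probability measure `ρ` on `α × ℝ`, where
`g` is a measurable bijection with measurable inverse and each fiber map `h_a` is a strictly
increasing homeomorphism of `ℝ`, then for `ρ.fst`-a.e. `a` the Rokhlin conditional measure
`ρ_a` is a Dirac mass at a single point. -/
theorem stmt10
    {α : Type*} [MeasurableSpace α] [StandardBorelSpace α] [Nonempty α]
    (ρ : Measure (α × ℝ)) [IsProbabilityMeasure ρ]
    (g : α ≃ᵐ α) (h : α → ℝ ≃ₜ ℝ) (hmono : ∀ a, StrictMono (h a))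
    (T : α × ℝ → α × ℝ) (hT : T = fun p => (g p.1, h p.1 p.2))
    (hTmeas : Measurable T)
    (hinv : Measure.map T ρ = ρ)
    (herg : ∀ E : Set (α × ℝ), MeasurableSet E → T ⁻¹' E = E → ρ E = 0 ∨ ρ E = 1) :
    ∀ᵐ a ∂ρ.fst, ∃ ω : ℝ, ρ.condKernel a = Measure.dirac ω := by
  -- basic measurability of the fiber maps
  have hh : Measurable fun p : α × ℝ => h p.1 p.2 := by
    have := measurable_snd.comp hTmeas
    rwa [hT] at this
  -- the first marginal is `g`-invariant
  have hfst : ρ.fst.map g = ρ.fst := by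
    conv_rhs => rw [← hinv]
    rw [Measure.fst, Measure.fst, Measure.map_map measurable_fst hTmeas,
      Measure.map_map g.measurable measurable_fst]
    congr 1
    funext p
    rw [hT]
    rfl
  set κ : Kernel α ℝ := pushKernel ρ g h hh with hκdef
  -- `κ` also disintegrates `ρ`
  have hdis : ρ = ρ.fst ⊗ₘ κ := by
    ext s hs
    conv_lhs => rw [← hinv, Measure.map_apply hTmeas hs, ← ρ.disintegrate ρ.condKernel,
      Measure.compProd_apply (hTmeas hs)]
    rw [Measure.compProd_apply hs]
    conv_rhs => rw [← hfst,
      lintegral_map (Kernel.measurable_kernel_prodMk_left hs) g.measurable]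
    refine lintegral_congr fun a => ?_
    rw [pushKernel_apply, MeasurableEquiv.symm_apply_apply,
      Measure.map_apply (h a).continuous.measurable (measurable_prodMk_left hs)]
    congr 1
    ext ω
    simp [hT]
  have huniq : ∀ᵐ b ∂ρ.fst, κ b = ρ.condKernel b :=
    eq_condKernel_of_measure_eq_compProd κ hdis
  -- transfer along `g`
  have hA : ∀ᵐ a ∂ρ.fst, Measure.map (h a) (ρ.condKernel a) = ρ.condKernel (g a) := by
    rw [← hfst] at huniq
    have h2 := ae_of_ae_map g.measurable.aemeasurable huniq
    filter_upwards [h2] with a ha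
    rw [← ha, hκdef, pushKernel_apply, MeasurableEquiv.symm_apply_apply]
  -- the ergodic invariant function: the conditional CDF evaluated at the point
  set φ : α × ℝ → ENNReal := fun p => ρ.condKernel p.1 (Set.Iio p.2) with hφdef
  have hφm : Measurable φ := by
    have hset : MeasurableSet {q : (α × ℝ) × ℝ | q.2 < q.1.2} :=
      measurableSet_lt measurable_snd measurable_fst.snd
    exact Kernel.measurable_kernel_prodMk_left
      (κ := (ρ.condKernel).comap Prod.fst measurable_fst) hset
  -- lift a.e. statements on the base to the product
  have hfstae : ∀ {P : α → Prop}, (∀ᵐ a ∂ρ.fst, P a) → ∀ᵐ p ∂ρ, P p.1 := by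
    intro P hP
    exact ae_of_ae_map measurable_fst.aemeasurable hP
  -- φ is a.e. invariant
  have hcomp : (φ ∘ T) =ᵐ[ρ] φ := by
    filter_upwards [hfstae hA] with p hp
    have : φ (T p) = ρ.condKernel (g p.1) (Set.Iio (h p.1 p.2)) := by rw [hT]
    rw [Function.comp_apply, this, ← hp,
      Measure.map_apply (h p.1).continuous.measurable measurableSet_Iio]
    congr 1
    ext x
    exact (hmono p.1).lt_iff_lt
  -- ergodicity
  have hErg : Ergodic T ρ := by
    refine ⟨⟨hTmeas, hinv⟩, ⟨fun s hs hTs => ?_⟩⟩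
    rw [Filter.eventuallyConst_set']
    rcases herg s hs hTs with h0 | h1
    · exact Or.inl (ae_eq_empty.2 h0)
    · exact Or.inr (ae_eq_univ.2 ((prob_compl_eq_zero_iff hs).2 h1))
  obtain ⟨c, hc⟩ := hErg.ae_eq_const_of_ae_eq_comp₀ hφm.nullMeasurable hcomp
  -- disintegrate the constancy statement
  have hcc : ∀ᵐ a ∂ρ.fst, ∀ᵐ ω ∂ρ.condKernel a, ρ.condKernel a (Set.Iio ω) = c := by
    rw [← ρ.disintegrate ρ.condKernel] at hc
    exact Measure.ae_ae_of_ae_compProd hc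
  filter_upwards [hcc] with a ha
  exact dirac_of_ae_cdf_const (ρ.condKernel a) c ha
end

section
/- Let α be a standard Borel space and ρ a Borel probability measure on α × ℝ with disintegration (ρ_a)_{a∈α} over the first coordinate. Let T : α × ℝ → α × ℝ be measurable of the form T(a,ω) = (g(a), h(a,ω)) with T_*ρ = ρ, where g : α → α is a measurable bijection with measurable inverse and each ω ↦ h(a,ω) is a strictly increasing homeomorphism of ℝ. For c ∈ [0,1] set H_c = {(a,ω) : ρ_a((-∞,ω]) ≤ c}. Then H_c is T-invariant modulo ρ (i.e. ρ(T⁻¹(H_c) Δ H_c) = 0), ρ(H_c) ≤ c, and if ρ_a is non-atomic for ρ.fst-almost every a, then ρ(H_c) = c for every c ∈ [0,1]. -/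
/-!
By uniqueness of disintegration, the skew product `T` transports the conditional measures:
`ρ_{g a}` is the image of `ρ_a` under `h a` for `ρ.fst`-a.e. `a`. As `h a` is increasing, the
fibrewise distribution function `F (a, ω) = ρ_a (Iic ω)` satisfies `F ∘ T = F` a.e., so
`H c = {F ≤ c}` is invariant mod `ρ`. On a fibre, a compact subset of `{F ≤ c}` lies below its
maximum `m`, so it has measure at most `F m ≤ c`; by inner regularity the whole fibre of `H c`
has measure at most `c`. Dually, when `ρ_a` has no atoms, a compact subset of `{F > c}` lies above
its minimum `m` and has measure at most `1 - F m < 1 - c`.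
-/

open MeasureTheory ProbabilityTheory Set Function
open scoped ENNReal symmDiff

lemma measurableSet_setOf_measure_Iic_le (μ : Measure ℝ) (c : ℝ≥0∞) :
    MeasurableSet {ω | μ (Iic ω) ≤ c} :=
  measurableSet_le (Monotone.measurable fun _ _ hxy => measure_mono (Iic_subset_Iic.2 hxy))
    measurable_const

lemma measure_setOf_measure_Iic_le_le (μ : Measure ℝ) [IsFiniteMeasure μ] (c : ℝ≥0∞) :
    μ {ω | μ (Iic ω) ≤ c} ≤ c := by
  rw [(measurableSet_setOf_measure_Iic_le μ c).measure_eq_iSup_isCompact]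
  refine iSup₂_le fun K hKS => iSup_le fun hK => ?_
  rcases K.eq_empty_or_nonempty with rfl | hne
  · simp
  obtain ⟨m, hmK, hm⟩ := hK.exists_isGreatest hne
  exact (measure_mono hm).trans (hKS hmK)

lemma le_measure_setOf_measure_Iic_le (μ : Measure ℝ) [IsFiniteMeasure μ] [NullSingletonClass μ]
    {c : ℝ≥0∞} (hc : c ≤ μ univ) : c ≤ μ {ω | μ (Iic ω) ≤ c} := by
  set S := {ω | μ (Iic ω) ≤ c}
  have hS : MeasurableSet S := measurableSet_setOf_measure_Iic_le μ c
  suffices μ Sᶜ ≤ μ univ - c by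
    refine ENNReal.le_of_add_le_add_right (measure_ne_top μ Sᶜ) ?_
    calc c + μ Sᶜ ≤ c + (μ univ - c) := by gcongr
      _ = μ S + μ Sᶜ := by rw [add_tsub_cancel_of_le hc, measure_add_measure_compl hS]
  rw [hS.compl.measure_eq_iSup_isCompact]
  refine iSup₂_le fun K hKS => iSup_le fun hK => ?_
  rcases K.eq_empty_or_nonempty with rfl | hne
  · simp
  obtain ⟨m, hmK, hm⟩ := hK.exists_isLeast hne
  have hcm : c < μ (Iic m) := not_le.1 (hKS hmK)
  calc μ K ≤ μ (Ici m) := measure_mono hm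
    _ = μ univ - μ (Iic m) := by
      rw [← compl_Iio, measure_compl measurableSet_Iio (measure_ne_top _ _),
        measure_congr Iio_ae_eq_Iic]
    _ ≤ μ univ - c := tsub_le_tsub_left hcm.le _

namespace ProbabilityTheory.Kernel

variable {α Ω Ω' : Type*} [MeasurableSpace α] [MeasurableSpace Ω] [MeasurableSpace Ω']

noncomputable def mapFiberwise (κ : Kernel α Ω) [IsSFiniteKernel κ] (h : α → Ω → Ω') :
    Kernel α Ω' :=
  (deterministic id measurable_id ×ₖ κ).map (uncurry h)

lemma mapFiberwise_apply (κ : Kernel α Ω) [IsSFiniteKernel κ] {h : α → Ω → Ω'}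
    (hh : Measurable (uncurry h)) (a : α) : κ.mapFiberwise h a = (κ a).map (h a) := by
  rw [mapFiberwise, map_apply _ hh, prod_apply, deterministic_apply, Measure.dirac_prod,
    Measure.map_map hh measurable_prodMk_left]
  rfl

instance (κ : Kernel α Ω) [IsSFiniteKernel κ] (h : α → Ω → Ω') :
    IsSFiniteKernel (κ.mapFiberwise h) := by
  rw [mapFiberwise]; infer_instance

lemma isMarkovKernel_mapFiberwise (κ : Kernel α Ω) [IsMarkovKernel κ] {h : α → Ω → Ω'}
    (hh : Measurable (uncurry h)) : IsMarkovKernel (κ.mapFiberwise h) :=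
  IsMarkovKernel.map _ hh

lemma measurable_apply_Iic (κ : Kernel α ℝ) [IsSFiniteKernel κ] :
    Measurable fun p : α × ℝ => κ p.1 (Iic p.2) :=
  measurable_kernel_prodMk_left (κ := κ.comap Prod.fst measurable_fst)
    (measurableSet_le measurable_snd (measurable_snd.comp measurable_fst))

end ProbabilityTheory.Kernel

namespace MeasureTheory.Measure

variable {α β Ω Ω' : Type*} [MeasurableSpace α] [MeasurableSpace β] [MeasurableSpace Ω]
  [MeasurableSpace Ω']

lemma map_compProd_skewProduct (μ : Measure α) [SFinite μ] (κ : Kernel α Ω) [IsSFiniteKernel κ]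
    (g : α ≃ᵐ β) {h : α → Ω → Ω'} (hh : Measurable (uncurry h)) :
    (μ ⊗ₘ κ).map (fun p => (g p.1, h p.1 p.2)) =
      μ.map g ⊗ₘ (κ.mapFiberwise h).comap g.symm g.symm.measurable := by
  have hT : Measurable fun p : α × Ω => (g p.1, h p.1 p.2) :=
    (g.measurable.comp measurable_fst).prodMk hh
  ext s hs
  rw [map_apply hT hs, compProd_apply (hT hs), compProd_apply hs,
    lintegral_map (Kernel.measurable_kernel_prodMk_left hs) g.measurable]
  refine lintegral_congr fun a => ?_
  rw [Kernel.comap_apply, g.symm_apply_apply, Kernel.mapFiberwise_apply _ hh,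
    map_apply hh.of_uncurry_left (measurable_prodMk_left hs)]
  rfl

variable [StandardBorelSpace Ω] [Nonempty Ω] [StandardBorelSpace Ω'] [Nonempty Ω']

lemma ae_condKernel_map_skewProduct (ρ : Measure (α × Ω)) [IsFiniteMeasure ρ]
    (ρ' : Measure (β × Ω')) [IsFiniteMeasure ρ'] (g : α ≃ᵐ β) {h : α → Ω → Ω'}
    (hh : Measurable (uncurry h)) (hρ : ρ.map (fun p => (g p.1, h p.1 p.2)) = ρ') :
    ∀ᵐ a ∂ρ.fst, ρ'.condKernel (g a) = (ρ.condKernel a).map (h a) := by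
  subst hρ
  have := ρ.condKernel.isMarkovKernel_mapFiberwise hh
  set κ := (ρ.condKernel.mapFiberwise h).comap g.symm g.symm.measurable
  have hdis : ρ.map (fun p => (g p.1, h p.1 p.2)) = ρ.fst.map g ⊗ₘ κ := by
    conv_lhs => rw [← ρ.disintegrate ρ.condKernel]
    exact map_compProd_skewProduct _ _ g hh
  have hfst : (ρ.map fun p => (g p.1, h p.1 p.2)).fst = ρ.fst.map g := by
    rw [hdis, fst_compProd]
  have huniq := eq_condKernel_of_measure_eq_compProd κ (hfst ▸ hdis)
  rw [hfst] at huniq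
  filter_upwards [ae_of_ae_map g.measurable.aemeasurable huniq] with a ha
  rw [← ha, Kernel.comap_apply, g.symm_apply_apply, Kernel.mapFiberwise_apply _ hh]

lemma ae_condKernel_Iic_skewProduct (ρ : Measure (α × ℝ)) [IsFiniteMeasure ρ]
    (ρ' : Measure (β × ℝ)) [IsFiniteMeasure ρ'] (g : α ≃ᵐ β) {h : α → ℝ → ℝ}
    (hh : Measurable (uncurry h)) (hmono : ∀ a, StrictMono (h a))
    (hρ : ρ.map (fun p => (g p.1, h p.1 p.2)) = ρ') :
    ∀ᵐ p ∂ρ, ρ'.condKernel (g p.1) (Iic (h p.1 p.2)) = ρ.condKernel p.1 (Iic p.2) := by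
  filter_upwards [ae_of_ae_map measurable_fst.aemeasurable
    (ae_condKernel_map_skewProduct ρ ρ' g hh hρ)] with p hp
  rw [hp, map_apply hh.of_uncurry_left measurableSet_Iic]
  congr 1
  ext ω
  exact (hmono p.1).le_iff_le

end MeasureTheory.Measure

theorem stmt11_general
    {α : Type*} [MeasurableSpace α]
    (ρ : Measure (α × ℝ)) [IsProbabilityMeasure ρ]
    (g : α ≃ᵐ α) (h : α → ℝ ≃ₜ ℝ) (hmono : ∀ a, StrictMono (h a))
    (T : α × ℝ → α × ℝ) (hT : T = fun p => (g p.1, h p.1 p.2))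
    (hTmeas : Measurable T)
    (hinv : Measure.map T ρ = ρ)
    (H : ENNReal → Set (α × ℝ))
    (hH : ∀ c, H c = {p : α × ℝ | ρ.condKernel p.1 (Set.Iic p.2) ≤ c}) :
    (∀ c : ENNReal, c ≤ 1 → ρ ((T ⁻¹' H c) ∆ H c) = 0 ∧ ρ (H c) ≤ c) ∧
      ((∀ᵐ a ∂ρ.fst, ∀ ω : ℝ, ρ.condKernel a {ω} = 0) →
        ∀ c : ENNReal, c ≤ 1 → ρ (H c) = c) := by
  subst hT
  have hcdf := ρ.ae_condKernel_Iic_skewProduct ρ g (h := fun a => h a)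
    (measurable_snd.comp hTmeas) hmono hinv
  have hH_eq : ∀ c, ρ (H c) = ∫⁻ a, ρ.condKernel a {ω | ρ.condKernel a (Iic ω) ≤ c} ∂ρ.fst :=
    fun c => by
      rw [hH, ← Measure.lintegral_condKernel_mem
        (measurableSet_le (Kernel.measurable_apply_Iic _) measurable_const)]
      rfl
  refine ⟨fun c _ => ⟨?_, ?_⟩, fun hna c hc => ?_⟩
  · rw [measure_symmDiff_eq_zero_iff]
    filter_upwards [hcdf] with p hp
    rw [hH]
    exact congrArg (· ≤ c) hp
  · calc ρ (H c) ≤ ∫⁻ _, c ∂ρ.fst := hH_eq c ▸ lintegral_mono fun a =>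
          measure_setOf_measure_Iic_le_le _ c
      _ = c := by simp
  · have hfiber_eq : ∀ᵐ a ∂ρ.fst, ρ.condKernel a {ω | ρ.condKernel a (Iic ω) ≤ c} = c := by
      filter_upwards [hna] with a ha
      have : NullSingletonClass (ρ.condKernel a) := ⟨ha⟩
      exact le_antisymm (measure_setOf_measure_Iic_le_le _ c)
        (le_measure_setOf_measure_Iic_le _ (by rwa [measure_univ]))
    rw [hH_eq, lintegral_congr_ae hfiber_eq]
    simp

/-- Key step in the virtual hyperbolicity lemma: for `T(a,ω) = (g a, h_a(ω))` preserving a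
probability measure `ρ` on `α × ℝ`, with `g` a measurable bijection with measurable inverse
and each fiber map `h_a` a strictly increasing homeomorphism of `ℝ`, the sublevel sets
`H_c = {(a,ω) | ρ_a((-∞,ω]) ≤ c}` of the fiberwise CDFs are `T`-invariant modulo `ρ`, satisfy
`ρ(H_c) ≤ c`, and have measure exactly `c` for every `c ∈ [0,1]` if the conditional measures
are a.e. non-atomic. -/
theorem stmt11
    {α : Type*} [MeasurableSpace α] [StandardBorelSpace α] [Nonempty α]
    (ρ : Measure (α × ℝ)) [IsProbabilityMeasure ρ]
    (g : α ≃ᵐ α) (h : α → ℝ ≃ₜ ℝ) (hmono : ∀ a, StrictMono (h a))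
    (T : α × ℝ → α × ℝ) (hT : T = fun p => (g p.1, h p.1 p.2))
    (hTmeas : Measurable T)
    (hinv : Measure.map T ρ = ρ)
    (H : ENNReal → Set (α × ℝ))
    (hH : ∀ c, H c = {p : α × ℝ | ρ.condKernel p.1 (Set.Iic p.2) ≤ c}) :
    (∀ c : ENNReal, c ≤ 1 → ρ ((T ⁻¹' H c) ∆ H c) = 0 ∧ ρ (H c) ≤ c) ∧
      ((∀ᵐ a ∂ρ.fst, ∀ ω : ℝ, ρ.condKernel a {ω} = 0) →
        ∀ c : ENNReal, c ≤ 1 → ρ (H c) = c) :=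
  stmt11_general ρ g h hmono T hT hTmeas hinv H hH
end
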